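/- arXiv:1008.5329 — 6 statements merged into one kernel-verified Lean document; each statement's English description precedes it below -/
import Mathlib

section
/- Let $n \geq 3$ and let $U = (u_{ij})$ be a symmetric $n \times n$ matrix over a field with $u_{ii} = 0$ for all $i$, whose entries satisfy the Ptolemy/Plücker exchange relations: for all $i < j < k < l$ (indices in cyclic order), $u_{ij}u_{kl} + u_{jk}u_{li} = u_{ik}u_{jl}$, and suppose all off-diagonal entries are nonzero. Then $\det(U) = -(-2)^{n-2} \, u_{12}u_{23}\cdots u_{n-1,n}u_{n,1}$. -/
/-!
Let `a < b < c` be the last three indices. For `i < a` the Ptolemy relation for `i < a < b < c`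
says `U_ab U_ic = U_ac U_ib - U_bc U_ia`, and the same combination at `i = a, b, c` gives
`0, 2 U_ab U_bc, 0`. So subtracting `(U_ac/U_ab)·(row b) - (U_bc/U_ab)·(row a)` from the last row,
and likewise for the last column, leaves a matrix whose last row and column vanish outside
`{b, c}`. Expanding it gives the three-term recurrence
`det U = -2 U_ac U_bc / U_ab · det U₀ - (2 U_bc)² · det U₁`
for the leading principal submatrices `U₀`, `U₁` of sizes `n - 1` and `n - 2`, and the closed
form propagates through it by the Ptolemy relation for `0 < a < b < c`.
-/

namespace Matrix

-- Sizes are written `m + 1 + 1` rather than `m + 2` so that they agree syntactically with the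
-- types of `Fin.last` and `Fin.castSucc`, as rewriting requires.

section CommMonoid

variable {M : Type*} [CommMonoid M] {n : ℕ}

theorem prod_finRotate (U : Matrix (Fin (n + 1)) (Fin (n + 1)) M) :
    ∏ i, U i (finRotate _ i) = (∏ i : Fin n, U i.castSucc i.succ) * U (Fin.last n) 0 := by
  rw [Fin.prod_univ_castSucc, finRotate_last]
  simp [Fin.coeSucc_eq_succ]

theorem prod_finRotate_mul_eq (U : Matrix (Fin (n + 1 + 1)) (Fin (n + 1 + 1)) M) :
    (∏ i, U i (finRotate _ i)) * U (Fin.last n).castSucc 0 =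
      (∏ i, U.submatrix Fin.castSucc Fin.castSucc i (finRotate _ i))
        * U (Fin.last n).castSucc (Fin.last _) * U (Fin.last _) 0 := by
  rw [prod_finRotate, prod_finRotate, Fin.prod_univ_castSucc]
  simp only [submatrix_apply, Fin.succ_castSucc, Fin.succ_last, Fin.castSucc_zero]
  ac_rfl

end CommMonoid

section CommRing

variable {R : Type*} [CommRing R] {m : ℕ}

theorem det_eq_of_lastRow_lastCol_eq_zero (M : Matrix (Fin (m + 1 + 1)) (Fin (m + 1 + 1)) R)
    (hrow : ∀ j : Fin m, M (Fin.last _) j.castSucc.castSucc = 0)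
    (hcol : ∀ i : Fin m, M i.castSucc.castSucc (Fin.last _) = 0) :
    M.det = M (Fin.last _) (Fin.last _) * (M.submatrix Fin.castSucc Fin.castSucc).det
      - M (Fin.last _) (Fin.last m).castSucc * M (Fin.last m).castSucc (Fin.last _)
        * (M.submatrix (Fin.castSucc ∘ Fin.castSucc) (Fin.castSucc ∘ Fin.castSucc)).det := by
  have hsucc : (Fin.last m).castSucc.succAbove ∘ Fin.castSucc = Fin.castSucc ∘ Fin.castSucc :=
    funext fun i => Fin.succAbove_castSucc_of_lt _ _ i.castSucc_lt_last
  have hminor : (M.submatrix Fin.castSucc (Fin.last m).castSucc.succAbove).det =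
      M (Fin.last m).castSucc (Fin.last _) *
        (M.submatrix (Fin.castSucc ∘ Fin.castSucc) (Fin.castSucc ∘ Fin.castSucc)).det := by
    rw [det_succ_column _ (Fin.last m), Fin.sum_univ_castSucc]
    simp [hcol, hsucc]
  rw [det_succ_row M (Fin.last _), Fin.sum_univ_castSucc, Fin.sum_univ_castSucc]
  simp [hrow, hminor]
  ring

theorem det_eq_of_vecMul_eq_single_of_mulVec_eq_single
    (U : Matrix (Fin (m + 1 + 1)) (Fin (m + 1 + 1)) R) (v : Fin (m + 1 + 1) → R)
    (hv : v (Fin.last _) = 1)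
    {β γ : R} (hvU : v ᵥ* U = Pi.single (Fin.last m).castSucc β)
    (hUv : U *ᵥ v = Pi.single (Fin.last m).castSucc γ) :
    U.det = β * v (Fin.last m).castSucc * (U.submatrix Fin.castSucc Fin.castSucc).det
      - β * γ
        * (U.submatrix (Fin.castSucc ∘ Fin.castSucc) (Fin.castSucc ∘ Fin.castSucc)).det := by
  set N := U.updateRow (Fin.last _) (v ᵥ* U) with hN
  set M := N.updateCol (Fin.last _) (N *ᵥ v) with hM
  have hdetN : N.det = U.det := by
    rw [hN, vecMul_eq_sum, det_updateRow_sum, hv, one_smul]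
  have hdetM : M.det = N.det := by
    have : N *ᵥ v = fun i => ∑ k, v k • N i k := by
      ext i; simp [mulVec, dotProduct, mul_comm]
    rw [hM, this, det_updateCol_sum, hv, one_smul]
  have hNv : N *ᵥ v = Function.update (Pi.single (Fin.last m).castSucc γ) (Fin.last _)
      (β * v (Fin.last m).castSucc) := by
    rw [hN, updateRow_mulVec, hvU, hUv, single_dotProduct]
  have hMU : ∀ i j : Fin (m + 1), M i.castSucc j.castSucc = U i.castSucc j.castSucc := by
    intro i j
    simp [hM, hN, Fin.castSucc_lt_last j |>.ne, Fin.castSucc_lt_last i |>.ne]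
  have hM0 : M.submatrix Fin.castSucc Fin.castSucc = U.submatrix Fin.castSucc Fin.castSucc :=
    Matrix.ext hMU
  have hM1 : M.submatrix (Fin.castSucc ∘ Fin.castSucc) (Fin.castSucc ∘ Fin.castSucc) =
      U.submatrix (Fin.castSucc ∘ Fin.castSucc) (Fin.castSucc ∘ Fin.castSucc) :=
    Matrix.ext fun i j => hMU i.castSucc j.castSucc
  rw [← hdetN, ← hdetM, M.det_eq_of_lastRow_lastCol_eq_zero, hM0, hM1]
  · rw [hM, updateCol_self, updateCol_ne (Fin.castSucc_lt_last _).ne, updateCol_self, hNv, hN,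
      updateRow_self, hvU]
    simp
  · intro j
    simp [hM, hN, hvU]
  · intro i
    simp [hM, hNv]

def IsPtolemy {n : ℕ} (U : Matrix (Fin n) (Fin n) R) : Prop :=
  ∀ i j k l : Fin n, i < j → j < k → k < l → U i j * U k l + U j k * U l i = U i k * U j l

theorem IsPtolemy.submatrix {m n : ℕ} {U : Matrix (Fin n) (Fin n) R} (hU : U.IsPtolemy)
    {f : Fin m → Fin n} (hf : StrictMono f) : (U.submatrix f f).IsPtolemy :=
  fun _ _ _ _ hij hjk hkl => hU _ _ _ _ (hf hij) (hf hjk) (hf hkl)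

end CommRing

section Field

variable {F : Type*} [Field F] {n : ℕ}

theorem IsPtolemy.mulVec_eq_single {U : Matrix (Fin n) (Fin n) F} (hU : U.IsPtolemy)
    (hsym : U.IsSymm) (hdiag : ∀ i, U i i = 0) {a b c : Fin n} (hab : a < b) (hbc : b < c)
    (habc : ∀ i, i < a ∨ i = a ∨ i = b ∨ i = c) (hUab : U a b ≠ 0) :
    U *ᵥ (Pi.single c 1 - (U a c / U a b) • Pi.single b 1 + (U b c / U a b) • Pi.single a 1) =
      Pi.single b (2 * U b c) := by
  ext i
  simp only [mulVec_add, mulVec_sub, mulVec_smul, mulVec_single_one, Pi.add_apply, Pi.sub_apply,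
    Pi.smul_apply, col_apply, smul_eq_mul]
  rcases habc i with hia | hi | hi | hi <;> try subst i
  · rw [Pi.single_eq_of_ne (hia.trans hab).ne]
    field_simp
    linear_combination hU i a b c hia hab hbc - U a b * hsym.apply i c
  · rw [Pi.single_eq_of_ne hab.ne, hdiag]
    field_simp
    ring
  · rw [Pi.single_eq_same, hdiag, hsym.apply a b]
    field_simp
    ring
  · rw [Pi.single_eq_of_ne hbc.ne', hdiag, hsym.apply b c, hsym.apply a c]
    field_simp
    ring

variable {m : ℕ}

theorem IsPtolemy.det_recurrence {U : Matrix (Fin (m + 1 + 1 + 1)) (Fin (m + 1 + 1 + 1)) F}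
    (hU : U.IsPtolemy) (hsym : U.IsSymm) (hdiag : ∀ i, U i i = 0)
    (hUab : U (Fin.last m).castSucc.castSucc (Fin.last (m + 1)).castSucc ≠ 0) :
    U.det = -2 * U (Fin.last m).castSucc.castSucc (Fin.last (m + 1 + 1))
          * U (Fin.last (m + 1)).castSucc (Fin.last (m + 1 + 1))
          / U (Fin.last m).castSucc.castSucc (Fin.last (m + 1)).castSucc
          * (U.submatrix Fin.castSucc Fin.castSucc).det
        - (2 * U (Fin.last (m + 1)).castSucc (Fin.last (m + 1 + 1))) ^ 2
          * (U.submatrix (Fin.castSucc ∘ Fin.castSucc) (Fin.castSucc ∘ Fin.castSucc)).det := by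
  set a : Fin (m + 1 + 1 + 1) := (Fin.last m).castSucc.castSucc
  set b : Fin (m + 1 + 1 + 1) := (Fin.last (m + 1)).castSucc
  set c : Fin (m + 1 + 1 + 1) := Fin.last (m + 1 + 1)
  have hab : a < b := by simp [a, b, Fin.lt_def]
  have hbc : b < c := Fin.castSucc_lt_last _
  have habc : ∀ i, i < a ∨ i = a ∨ i = b ∨ i = c := by
    intro i
    simp only [a, b, c, Fin.lt_def, Fin.ext_iff, Fin.val_castSucc, Fin.val_last]
    omega
  set v : Fin (m + 1 + 1 + 1) → F :=
    Pi.single c 1 - (U a c / U a b) • Pi.single b 1 + (U b c / U a b) • Pi.single a 1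
  have hUv : U *ᵥ v = Pi.single b (2 * U b c) := hU.mulVec_eq_single hsym hdiag hab hbc habc hUab
  have hvU : v ᵥ* U = Pi.single b (2 * U b c) := by
    conv_lhs => rw [← hsym.eq]
    rwa [vecMul_transpose]
  have hvc : v c = 1 := by simp [v, (hab.trans hbc).ne', hbc.ne']
  have hvb : v b = -(U a c / U a b) := by simp [v, hab.ne', hbc.ne]
  rw [det_eq_of_vecMul_eq_single_of_mulVec_eq_single U v hvc hvU hUv, hvb]
  ring

theorem IsPtolemy.det_eq_of_submatrix
    {U : Matrix (Fin (m + 1 + 1 + 1 + 1)) (Fin (m + 1 + 1 + 1 + 1)) F}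
    (hU : U.IsPtolemy) (hsym : U.IsSymm) (hdiag : ∀ i, U i i = 0)
    (hnz : ∀ i j, i ≠ j → U i j ≠ 0)
    (h0 : (U.submatrix Fin.castSucc Fin.castSucc).det =
      -(-2) ^ (m + 1) * ∏ i, U.submatrix Fin.castSucc Fin.castSucc i (finRotate _ i))
    (h1 : (U.submatrix (Fin.castSucc ∘ Fin.castSucc) (Fin.castSucc ∘ Fin.castSucc)).det =
      -(-2) ^ m *
        ∏ i, U.submatrix (Fin.castSucc ∘ Fin.castSucc) (Fin.castSucc ∘ Fin.castSucc) i
          (finRotate _ i)) :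
    U.det = -(-2) ^ (m + 2) * ∏ i, U i (finRotate _ i) := by
  rw [hU.det_recurrence hsym hdiag (hnz _ _ (by simp [Fin.ext_iff])), h0, h1]
  have hX := prod_finRotate_mul_eq U
  have hC0 := prod_finRotate_mul_eq (U.submatrix Fin.castSucc Fin.castSucc)
  rw [submatrix_submatrix] at hC0
  set X := ∏ i, U i (finRotate _ i)
  set C0 := ∏ i, U.submatrix Fin.castSucc Fin.castSucc i (finRotate _ i)
  set C1 := ∏ i, U.submatrix (Fin.castSucc ∘ Fin.castSucc) (Fin.castSucc ∘ Fin.castSucc) i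
    (finRotate _ i)
  simp only [submatrix_apply, Fin.castSucc_zero] at hC0
  set a : Fin (m + 1 + 1 + 1 + 1) := (Fin.last (m + 1)).castSucc.castSucc
  set b : Fin (m + 1 + 1 + 1 + 1) := (Fin.last (m + 1 + 1)).castSucc
  set c : Fin (m + 1 + 1 + 1 + 1) := Fin.last (m + 1 + 1 + 1)
  have hab : U a b ≠ 0 := hnz _ _ (by simp [a, b, Fin.ext_iff])
  have hb0 : U b 0 ≠ 0 := hnz _ _ (by simp [b, Fin.ext_iff])
  have hptolemy := hU 0 a b c (by simp [a, Fin.lt_def]) (by simp [a, b, Fin.lt_def])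
    (Fin.castSucc_lt_last _)
  have hE : U b c ^ 2 * C1 * U a b + X * U a b - U a c * U b c * C0 = 0 := by
    refine (mul_eq_zero.mp ?_).resolve_left hb0
    linear_combination -U b c ^ 2 * hC0 + U a b * hX + C0 * U b c * hptolemy
      + C0 * U b c ^ 2 * hsym.apply 0 a - C0 * U b c * U a c * hsym.apply 0 b
  field_simp
  linear_combination (-2) ^ (m + 2) * hE

theorem IsPtolemy.det_eq_neg_neg_two_pow_mul_prod (n : ℕ)
    {U : Matrix (Fin (n + 2)) (Fin (n + 2)) F} (hU : U.IsPtolemy) (hsym : U.IsSymm)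
    (hdiag : ∀ i, U i i = 0) (hnz : ∀ i j, i ≠ j → U i j ≠ 0) :
    U.det = -(-2) ^ n * ∏ i, U i (finRotate _ i) := by
  induction n using Nat.twoStepInduction with
  | zero =>
    rw [det_fin_two]
    simp [Fin.prod_univ_succ, hdiag]
  | one =>
    rw [det_fin_three]
    simp [Fin.prod_univ_succ, hdiag, hsym.apply 0 1, hsym.apply 0 2, hsym.apply 1 2]
    ring
  | more n ih0 ih1 =>
    exact hU.det_eq_of_submatrix hsym hdiag hnz
      (ih1 (hU.submatrix Fin.strictMono_castSucc) (hsym.submatrix _) (fun _ => hdiag _)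
        fun _ _ hij => hnz _ _ (Fin.castSucc_injective _ |>.ne hij))
      (ih0 (hU.submatrix (Fin.strictMono_castSucc.comp Fin.strictMono_castSucc))
        (hsym.submatrix _) (fun _ => hdiag _)
        fun _ _ hij => hnz _ _
          ((Fin.castSucc_injective _).comp (Fin.castSucc_injective _) |>.ne hij))

end Field

end Matrix

/-- Frieze pattern determinant for a symmetric zero-diagonal matrix with nonzero
off-diagonal entries satisfying the cyclic Ptolemy/Plücker exchange relations. -/
theorem frieze_det {F : Type*} [Field F] (n : ℕ) (hn : 3 ≤ n)
    (U : Matrix (Fin n) (Fin n) F)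
    (hsym : U.IsSymm)
    (hdiag : ∀ i, U i i = 0)
    (hnz : ∀ i j : Fin n, i ≠ j → U i j ≠ 0)
    (hex : ∀ i j k l : Fin n, i < j → j < k → k < l →
      U i j * U k l + U j k * U l i = U i k * U j l) :
    U.det = -(-2 : F) ^ (n - 2) * ∏ i : Fin n, U i (finRotate n i) := by
  obtain ⟨m, rfl⟩ : ∃ m, n = m + 2 := ⟨n - 2, by omega⟩
  exact Matrix.IsPtolemy.det_eq_neg_neg_two_pow_mul_prod m hex hsym hdiag hnz
end

section
/- Let $n \geq 3$, let $\pi$ be a triangulation of a convex $n$-gon, and let $M(\pi) = (m_{ij})$ be the associated Conway–Coxeter frieze matrix, defined by $m_{ii} = 0$, $m_{i,i+1} = 1$, and the recurrence $m_{i-1,j+1} = (m_{i-1,j} m_{i+1,j} - 1)/m_{ij}$ with $m_{ji} = m_{ij}$. Then $\det(M(\pi)) = -(-2)^{n-2}$. -/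
/-!
A frieze matrix of size at least 3 has an ear, a vertex `v` with `M (v - 1) (v + 1) = 1`:
otherwise, by the three-term recurrence `M i (j - 1) + M i (j + 1) = M (j - 1) (j + 1) * M i j`
that every row satisfies off the diagonal, row `0` would increase strictly all the way around
the polygon and could not come back to `M 0 0 = 0`. At an ear the recurrence says that row `v`
is the sum of rows `v - 1` and `v + 1`, except in column `v`, where they differ by `-2`.
Subtracting them, `det M = -2 * det M'`, where `M'` deletes vertex `v` and is again a frieze
matrix. This reduces the size down to `2`, where `det M = -1`.
-/

open Matrix

namespace ZMod

lemma natCast_ne_zero_of_lt {n k : ℕ} (hk : 0 < k) (hkn : k < n) : (k : ZMod n) ≠ 0 := by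
  rw [Ne, natCast_eq_zero_iff]
  exact Nat.not_dvd_of_pos_of_lt hk hkn

lemma induction_ne_sub_one {n : ℕ} [NeZero n] {P : ZMod n → Prop} {b : ZMod n} (base : P b)
    (step : ∀ j, j ≠ b - 1 → j + 1 ≠ b - 1 → P j → P (j + 1)) :
    ∀ j, j ≠ b - 1 → P j := by
  have walk : ∀ k : ℕ, k + 1 < n → P (b + k) := by
    intro k hk
    induction k with
    | zero => simpa using base
    | succ k ih =>
      have h1 : b + k ≠ b - 1 := fun h =>
        natCast_ne_zero_of_lt (n := n) (k := k + 1) (by omega) (by omega)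
          (by push_cast; linear_combination h)
      have h2 : b + k + 1 ≠ b - 1 := fun h =>
        natCast_ne_zero_of_lt (n := n) (k := k + 2) (by omega) (by omega)
          (by push_cast; linear_combination h)
      push_cast
      rw [← add_assoc]
      exact step _ h1 h2 (ih (by omega))
  intro j hj
  have hval : (j - b).val + 1 < n := by
    refine lt_of_le_of_ne (val_lt _) fun h => hj ?_
    have := congrArg (Nat.cast : ℕ → ZMod n) h
    push_cast [natCast_self, natCast_zmod_val] at this
    linear_combination this
  simpa using walk _ hval

variable {m : ℕ}

def castSucc (i : ZMod (m + 1)) : ZMod (m + 2) := i.val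

lemma val_castSucc (i : ZMod (m + 1)) : (castSucc i).val = i.val :=
  val_cast_of_lt (i.val_lt.trans (Nat.lt_succ_self _))

lemma castSucc_injective : Function.Injective (castSucc (m := m)) := fun i j h =>
  val_injective _ (by rw [← val_castSucc, h, val_castSucc])

lemma castSucc_ne_neg_one (i : ZMod (m + 1)) : castSucc i ≠ -1 := fun h => by
  have := val_castSucc i
  rw [h, val_neg_one] at this
  have := i.val_lt
  omega

@[simp] lemma castSucc_zero : castSucc (0 : ZMod (m + 1)) = 0 := by simp [castSucc]

@[simp] lemma castSucc_neg_one : castSucc (-1 : ZMod (m + 1)) = -2 := by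
  rw [castSucc, val_neg_one, eq_neg_iff_add_eq_zero]
  exact_mod_cast natCast_self (m + 2)

lemma castSucc_add_one {i : ZMod (m + 1)} (hi : i ≠ -1) : castSucc (i + 1) = castSucc i + 1 := by
  have hlt : i.val < m := lt_of_le_of_ne (Nat.lt_succ_iff.mp i.val_lt) fun h =>
    hi (val_injective _ (by rw [h, val_neg_one]))
  have : (i + 1).val = i.val + 1 := by
    rw [← val_cast_of_lt (n := m + 1) (a := i.val + 1) (by omega)]
    push_cast [natCast_zmod_val]
    rfl
  simp [castSucc, this]

lemma castSucc_sub_one {i : ZMod (m + 1)} (hi : i ≠ 0) : castSucc (i - 1) = castSucc i - 1 := by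
  rw [eq_sub_iff_add_eq, ← castSucc_add_one (by simpa [sub_eq_iff_eq_add] using hi),
    sub_add_cancel]

lemma castSucc_eq_finEquiv (i : Fin (m + 1)) :
    castSucc (finEquiv (m + 1) i) = finEquiv (m + 2) (Fin.castSucc i) :=
  val_injective _ (val_castSucc _)

lemma finEquiv_last (m : ℕ) : finEquiv (m + 1) (Fin.last m) = -1 :=
  val_injective _ (val_neg_one m).symm

end ZMod

lemma Matrix.det_updateRow_neg_one_single {R : Type*} [CommRing R] {m : ℕ}
    (A : Matrix (ZMod (m + 2)) (ZMod (m + 2)) R) (c : R) :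
    (A.updateRow (-1) (Pi.single (-1) c)).det =
      c * (A.submatrix ZMod.castSucc ZMod.castSucc).det := by
  let e := ZMod.finEquiv (m + 2)
  let e' := (ZMod.finEquiv (m + 1)).toEquiv
  rw [← det_submatrix_equiv_self e.toEquiv, det_succ_row _ (Fin.last _),
    ← det_submatrix_equiv_self e' (A.submatrix _ _), Fintype.sum_eq_single (Fin.last _)]
  · congr 1
    · simp [e, ZMod.finEquiv_last]
    · congr 1
      ext i j
      simp [e, e', ← ZMod.castSucc_eq_finEquiv, ZMod.castSucc_ne_neg_one]
  · intro j hj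
    have : e j ≠ -1 := by
      rw [← ZMod.finEquiv_last]
      exact e.injective.ne hj
    simp [e, ZMod.finEquiv_last, this]

structure IsFriezeMatrix {n : ℕ} (M : Matrix (ZMod n) (ZMod n) ℤ) : Prop where
  symm : M.IsSymm
  diag : ∀ i, M i i = 0
  one : ∀ i, M i (i + 1) = 1
  pos : ∀ i j, i ≠ j → 0 < M i j
  rule : ∀ i j, j ≠ i - 1 → M (i - 1) j * M i (j + 1) - M i j * M (i - 1) (j + 1) = 1

namespace IsFriezeMatrix

variable {n : ℕ} {M : Matrix (ZMod n) (ZMod n) ℤ}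

lemma nonneg (hM : IsFriezeMatrix M) (i j : ZMod n) : 0 ≤ M i j := by
  obtain rfl | hij := eq_or_ne i j
  · rw [hM.diag]
  · exact (hM.pos i j hij).le

lemma apply_comm (hM : IsFriezeMatrix M) (i j : ZMod n) : M i j = M j i :=
  hM.symm.apply j i

lemma submatrix_add_right (hM : IsFriezeMatrix M) (c : ZMod n) :
    IsFriezeMatrix (M.submatrix (· + c) (· + c)) where
  symm := by ext i j; exact hM.apply_comm _ _
  diag i := hM.diag _
  one i := by simpa only [submatrix_apply, add_right_comm] using hM.one (i + c)
  pos i j hij := hM.pos _ _ (by simpa using hij)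
  rule i j hij := by
    simpa only [submatrix_apply, sub_add_eq_add_sub, add_right_comm]
      using hM.rule (i + c) (j + c) fun h => hij (by linear_combination h)

lemma add_eq_mul [NeZero n] (hM : IsFriezeMatrix M) {i j : ZMod n} (hij : j ≠ i) :
    M (i - 1) j + M (i + 1) j = M (i - 1) (i + 1) * M i j := by
  refine ZMod.induction_ne_sub_one (b := i + 1) (P := fun j =>
    M (i - 1) j + M (i + 1) j = M (i - 1) (i + 1) * M i j) ?_ ?_ j (by simpa using hij)
  · simp [hM.diag, hM.one]
  · intro j hj hj' ih
    simp only [add_sub_cancel_right] at hj hj'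
    have h₁ := hM.rule i j (fun h => hj' (by rw [h]; ring))
    have h₂ := hM.rule (i + 1) j (by simpa using hj)
    simp only [add_sub_cancel_right] at h₂
    refine mul_left_cancel₀ (hM.pos i j (Ne.symm hj)).ne' ?_
    linear_combination h₂ - h₁ + M i (j + 1) * ih

lemma add_eq_mul' [NeZero n] (hM : IsFriezeMatrix M) {i j : ZMod n} (hij : i ≠ j) :
    M i (j - 1) + M i (j + 1) = M (j - 1) (j + 1) * M i j := by
  simpa only [hM.apply_comm i] using hM.add_eq_mul hij

lemma exists_ear [NeZero n] (hM : IsFriezeMatrix M) (hn : 3 ≤ n) :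
    ∃ v, M (v - 1) (v + 1) = 1 := by
  by_contra! hno
  have two_le : ∀ v : ZMod n, 2 ≤ M (v - 1) (v + 1) := by
    intro v
    have hne : v - 1 ≠ v + 1 := fun h =>
      ZMod.natCast_ne_zero_of_lt (n := n) (k := 2) two_pos (by omega)
        (by push_cast; linear_combination -h)
    have := hM.pos _ _ hne
    have := hno v
    omega
  have increasing : ∀ k : ℕ, k < n → M 0 k < M 0 (k + 1 : ℕ) := by
    intro k hk
    induction k with
    | zero => simp [hM.diag, by simpa using hM.one 0]
    | succ k ih =>
      have hk0 : ((k + 1 : ℕ) : ZMod n) ≠ 0 := ZMod.natCast_ne_zero_of_lt (by omega) hk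
      have hrec := hM.add_eq_mul' (i := 0) (j := (k + 1 : ℕ)) hk0.symm
      have ha := two_le ((k + 1 : ℕ) : ZMod n)
      push_cast at hrec ha ih ⊢
      simp only [add_sub_cancel_right, add_assoc, one_add_one_eq_two] at hrec ha ⊢
      nlinarith [ih (by omega), hM.nonneg 0 (k + 1)]
  have := increasing (n - 1) (by omega)
  rw [Nat.sub_add_cancel (by omega), ZMod.natCast_self, hM.diag] at this
  linarith [hM.nonneg 0 ((n - 1 : ℕ) : ZMod n)]

section

variable {m : ℕ} {M : Matrix (ZMod (m + 2)) (ZMod (m + 2)) ℤ}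

lemma apply_neg_two (hM : IsFriezeMatrix M) (hear : M (-2) 0 = 1) {x : ZMod (m + 2)}
    (hx : x ≠ -1) : M (-2) x = M (-1) x - M 0 x := by
  have := hM.add_eq_mul hx
  rw [show (-1 : ZMod (m + 2)) - 1 = -2 by ring, neg_add_cancel, hear] at this
  linear_combination this

lemma submatrix_castSucc (hM : IsFriezeMatrix M) (hear : M (-2) 0 = 1) :
    IsFriezeMatrix (M.submatrix ZMod.castSucc ZMod.castSucc) := by
  have rule_zero : ∀ j : ZMod (m + 1), j ≠ -1 → M (-2) j.castSucc * M 0 (j + 1).castSucc -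
      M 0 j.castSucc * M (-2) (j + 1).castSucc = 1 := by
    intro j hj
    rw [ZMod.castSucc_add_one hj, hM.apply_neg_two hear (ZMod.castSucc_ne_neg_one j),
      hM.apply_neg_two hear (by simpa only [← ZMod.castSucc_add_one hj] using
        ZMod.castSucc_ne_neg_one (j + 1))]
    have := hM.rule 0 j.castSucc (by simpa using ZMod.castSucc_ne_neg_one j)
    rw [zero_sub] at this
    linear_combination this
  refine
    { symm := by ext i j; exact hM.apply_comm _ _
      diag := fun i => hM.diag _
      one := fun i => ?_
      pos := fun i j hij => hM.pos _ _ (ZMod.castSucc_injective.ne hij)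
      rule := fun i j hij => ?_ }
  · obtain rfl | hi := eq_or_ne i (-1)
    · simpa using hear
    · simpa [ZMod.castSucc_add_one hi] using hM.one i.castSucc
  · obtain rfl | hi := eq_or_ne i 0
    · simpa using rule_zero j (by simpa using hij)
    obtain rfl | hj := eq_or_ne j (-1)
    -- by symmetry, this is the case `i = 0` at the entry `(0, i - 1)`
    · have := rule_zero (i - 1) (by simpa [sub_eq_iff_eq_add] using hi)
      rw [sub_add_cancel] at this
      simp only [submatrix_apply, neg_add_cancel, ZMod.castSucc_neg_one, ZMod.castSucc_zero]
      rw [hM.apply_comm _ (-2), hM.apply_comm _ (-2), hM.apply_comm _ 0, hM.apply_comm _ 0]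
      linear_combination this
    · simp only [submatrix_apply]
      rw [ZMod.castSucc_sub_one hi, ZMod.castSucc_add_one hj]
      exact hM.rule _ _ fun h =>
        hij (ZMod.castSucc_injective (by rw [ZMod.castSucc_sub_one hi, h]))

lemma det_eq_neg_two_mul (hM : IsFriezeMatrix M) (hear : M (-2) 0 = 1) :
    M.det = -2 * (M.submatrix ZMod.castSucc ZMod.castSucc).det := by
  have hrow : M (-1) = M (-2) + M 0 + Pi.single (-1) (-2) := by
    ext x
    obtain rfl | hx := eq_or_ne x (-1)
    · have h₁ : M (-2) (-1) = 1 := by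
        simpa [show (-2 : ZMod (m + 2)) + 1 = -1 by ring] using hM.one (-2)
      have h₂ : M 0 (-1) = 1 := by simpa [hM.apply_comm 0] using hM.one (-1)
      simp [hM.diag, h₁, h₂]
    · simp [hM.apply_neg_two hear hx, hx]
  have : Fact (1 < m + 2) := ⟨by omega⟩
  have h₁ : (-2 : ZMod (m + 2)) ≠ -1 := fun h => one_ne_zero (by linear_combination -h)
  have h₂ : (0 : ZMod (m + 2)) ≠ -1 := fun h => one_ne_zero (by linear_combination h)
  calc M.det = (M.updateRow (-1) (M (-2) + M 0 + Pi.single (-1) (-2))).det := by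
        rw [← hrow, updateRow_eq_self]
    _ = (M.updateRow (-1) (Pi.single (-1) (-2))).det := by
        rw [det_updateRow_add, det_updateRow_add, det_updateRow_eq_zero h₁,
          det_updateRow_eq_zero h₂, zero_add, zero_add]
    _ = _ := det_updateRow_neg_one_single M (-2)

lemma det_eq (hM : IsFriezeMatrix M) :
    M.det = -(-2) ^ m := by
  induction m with
  | zero =>
    rw [← det_submatrix_equiv_self (ZMod.finEquiv 2).toEquiv, det_fin_two]
    have h₁₀ : M 1 0 = 1 := hM.one 1
    simp [hM.diag, h₁₀, by simpa using hM.one 0]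
  | succ m ih =>
    obtain ⟨v, hv⟩ := hM.exists_ear (by omega)
    have hrot := det_submatrix_equiv_self (Equiv.addRight (v + 1)) M
    have hM' := hM.submatrix_add_right (v + 1)
    have hear : M.submatrix (· + (v + 1)) (· + (v + 1)) (-2) 0 = 1 := by
      simpa [show -2 + (v + 1) = v - 1 by ring] using hv
    rw [Equiv.coe_addRight] at hrot
    rw [← hrot, hM'.det_eq_neg_two_mul hear, ih (hM'.submatrix_castSucc hear), pow_succ]
    ring

end

end IsFriezeMatrix

theorem frieze_matrix_det_general (n : ℕ) [NeZero n]
    (M : Matrix (ZMod n) (ZMod n) ℤ)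
    (hsym : M.IsSymm)
    (hdiag : ∀ i, M i i = 0)
    (hone : ∀ i, M i (i + 1) = 1)
    (hpos : ∀ i j : ZMod n, i ≠ j → 0 < M i j)
    (hrule : ∀ i j : ZMod n, j ≠ i - 1 →
      M (i - 1) j * M i (j + 1) - M i j * M (i - 1) (j + 1) = 1) :
    M.det = -(-2 : ℤ) ^ (n - 2) := by
  obtain ⟨m, rfl⟩ : ∃ m, n = m + 2 := by
    obtain _ | _ | m := n
    · exact absurd rfl (NeZero.ne 0)
    · have := hone 0
      rw [Subsingleton.elim (0 + 1 : ZMod 1) 0, hdiag] at this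
      exact absurd this zero_ne_one
    · exact ⟨m, rfl⟩
  exact IsFriezeMatrix.det_eq ⟨hsym, hdiag, hone, hpos, hrule⟩

/-- Broline–Crowe–Isaacs: the determinant of a Conway–Coxeter frieze matrix, i.e. a
symmetric zero-diagonal integer matrix with `m_{i,i+1} = 1`, positive off-diagonal
entries, and satisfying the frieze (unimodular) recurrence, equals `-(-2)^(n-2)`. -/
theorem frieze_matrix_det (n : ℕ) [NeZero n] (hn : 3 ≤ n)
    (M : Matrix (ZMod n) (ZMod n) ℤ)
    (hsym : M.IsSymm)
    (hdiag : ∀ i, M i i = 0)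
    (hone : ∀ i, M i (i + 1) = 1)
    (hpos : ∀ i j : ZMod n, i ≠ j → 0 < M i j)
    (hrule : ∀ i j : ZMod n, j ≠ i - 1 →
      M (i - 1) j * M i (j + 1) - M i j * M (i - 1) (j + 1) = 1) :
    M.det = -(-2 : ℤ) ^ (n - 2) :=
  frieze_matrix_det_general n M hsym hdiag hone hpos hrule
end

section
/- Let $n \geq 2$, and consider subsets $C$ of positions $(i,j)$ with $1 \leq i,j \leq n$ and $i \neq j$, such that no two elements of $C$ share a row or a column. If $C$ is maximal with respect to inclusion among such subsets, then $|C| = n-1$ or $|C| = n$. -/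
/-! Every free row must coincide with every free column: otherwise the position (free row,
free column) is off-diagonal and could be added to `C`. Since `C` is a partial permutation,
there are exactly `n - |C|` free rows and as many free columns, so either there is no free
column (`|C| = n`) or there is at most one free row (`|C| ≥ n - 1`). -/

namespace Finset

variable {α : Type*} {C : Finset (α × α)}

theorem injOn_fst_of_pairwise_ne
    (hrc : ∀ p ∈ C, ∀ q ∈ C, p ≠ q → p.1 ≠ q.1 ∧ p.2 ≠ q.2) :
    Set.InjOn Prod.fst (C : Set (α × α)) :=
  fun p hp q hq h => by_contra fun hne => (hrc p hp q hq hne).1 h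

theorem injOn_snd_of_pairwise_ne
    (hrc : ∀ p ∈ C, ∀ q ∈ C, p ≠ q → p.1 ≠ q.1 ∧ p.2 ≠ q.2) :
    Set.InjOn Prod.snd (C : Set (α × α)) :=
  fun p hp q hq h => by_contra fun hne => (hrc p hp q hq hne).2 h

theorem eq_of_notMem_image_fst_of_notMem_image_snd [DecidableEq α]
    (hmax : ∀ p : α × α, p.1 ≠ p.2 → p ∉ C → ∃ q ∈ C, p.1 = q.1 ∨ p.2 = q.2)
    {i c : α} (hi : i ∉ C.image Prod.fst) (hc : c ∉ C.image Prod.snd) : i = c := by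
  by_contra hic
  have hmem : (i, c) ∉ C := fun h => hi (mem_image_of_mem _ h)
  obtain ⟨q, hq, hrow | hcol⟩ := hmax (i, c) hic hmem
  · exact hi (mem_image.mpr ⟨q, hq, hrow.symm⟩)
  · exact hc (mem_image.mpr ⟨q, hq, hcol.symm⟩)

theorem card_compl_image_fst_le_one [Fintype α] [DecidableEq α]
    (hmax : ∀ p : α × α, p.1 ≠ p.2 → p ∉ C → ∃ q ∈ C, p.1 = q.1 ∨ p.2 = q.2)
    (hfree : (C.image Prod.snd)ᶜ.Nonempty) : (C.image Prod.fst)ᶜ.card ≤ 1 := by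
  obtain ⟨c, hc⟩ := hfree
  refine card_le_one.mpr fun i hi j hj => ?_
  rw [mem_compl] at hi hj hc
  rw [eq_of_notMem_image_fst_of_notMem_image_snd hmax hi hc,
    eq_of_notMem_image_fst_of_notMem_image_snd hmax hj hc]

end Finset

theorem framefree_card_general (n : ℕ) (C : Finset (Fin n × Fin n))
    (hrc : ∀ p ∈ C, ∀ q ∈ C, p ≠ q → p.1 ≠ q.1 ∧ p.2 ≠ q.2)
    (hmax : ∀ p : Fin n × Fin n, p.1 ≠ p.2 → p ∉ C →
      ∃ q ∈ C, p.1 = q.1 ∨ p.2 = q.2) :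
    C.card = n - 1 ∨ C.card = n := by
  have hfst : (C.image Prod.fst).card = C.card :=
    Finset.card_image_of_injOn (Finset.injOn_fst_of_pairwise_ne hrc)
  have hsnd : (C.image Prod.snd).card = C.card :=
    Finset.card_image_of_injOn (Finset.injOn_snd_of_pairwise_ne hrc)
  have hle : C.card ≤ n := hfst ▸ (Finset.card_le_univ _).trans_eq (Fintype.card_fin n)
  by_cases hfree : (C.image Prod.snd)ᶜ.Nonempty
  · have h := Finset.card_compl_image_fst_le_one hmax hfree
    rw [Finset.card_compl, hfst, Fintype.card_fin] at h
    omega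
  · rw [Finset.not_nonempty_iff_eq_empty, Finset.compl_eq_empty_iff] at hfree
    right
    rw [← hsnd, hfree, Finset.card_univ, Fintype.card_fin]

/-- A maximal set of off-diagonal positions in an `n × n` grid, no two in the same row or
column, has cardinality `n - 1` or `n`. -/
theorem framefree_card (n : ℕ) (hn : 2 ≤ n) (C : Finset (Fin n × Fin n))
    (hoff : ∀ p ∈ C, p.1 ≠ p.2)
    (hrc : ∀ p ∈ C, ∀ q ∈ C, p ≠ q → p.1 ≠ q.1 ∧ p.2 ≠ q.2)
    (hmax : ∀ p : Fin n × Fin n, p.1 ≠ p.2 → p ∉ C →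
      ∃ q ∈ C, p.1 = q.1 ∨ p.2 = q.2) :
    C.card = n - 1 ∨ C.card = n :=
  framefree_card_general n C hrc hmax
end

section
/- Let $n \geq 2$. The maximal (under inclusion) sets of off-diagonal positions $\{(i,j): i \neq j\}$ in an $n \times n$ grid with no two positions in the same row or column, having cardinality exactly $n-1$, are in bijection with permutations of $\{1,\ldots,n\}$ having exactly one fixed point; hence their number is $D_n + (-1)^{n-1}$. -/
open Equiv Equiv.Perm Function Finset
open scoped Nat

/-!
A permutation `σ` with unique fixed point `r` is recorded by the `n - 1` off-diagonal cells
`(i, σ i)`, `i ≠ r`: they fill every row and column except row and column `r`, so the only cell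
that could still be added is the diagonal cell `(r, r)`. Conversely, a placement of `n - 1`
off-diagonal cells in distinct rows and columns misses exactly one row `r` and one column `c`;
maximality forces `r = c` (otherwise `(r, c)` could be added), and adding `(r, r)` completes it
to the graph of a permutation. Choosing the fixed point and then a derangement of the remaining
points gives `n D_{n-1} = D_n + (-1)^(n-1)` such permutations.
-/

section Counting

variable {α : Type*} [Fintype α] [DecidableEq α]

theorem card_perm_fixed_eq_singleton (a : α) :
    #{σ : Perm α | ({i | σ i = i} : Finset α) = {a}} =
      numDerangements (Fintype.card α - 1) := by
  have hfixed (σ : Perm α) :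
      ({i | σ i = i} : Finset α) = {a} ↔ ∀ i, ¬i ≠ a ↔ i ∈ fixedPoints σ := by
    simp [Finset.ext_iff, mem_fixedPoints, IsFixedPt, eq_comm]
  rw [← Fintype.card_subtype, Fintype.card_congr ((derangements.subtypeEquiv (· ≠ a)).trans
      (subtypeEquivRight fun σ => (hfixed σ).symm)).symm,
    card_derangements_eq_numDerangements, Fintype.card_subtype_compl, Fintype.card_subtype_eq]

theorem card_perm_card_fixed_eq_one :
    #{σ : Perm α | #{i | σ i = i} = 1} =
      Fintype.card α * numDerangements (Fintype.card α - 1) := by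
  have hunion : ({σ : Perm α | #{i | σ i = i} = 1} : Finset _) =
      univ.biUnion fun a => {σ : Perm α | ({i | σ i = i} : Finset α) = {a}} := by
    ext σ
    simp [card_eq_one]
  rw [hunion, card_biUnion]
  · simp [card_perm_fixed_eq_singleton]
  · intro a _ b _ hab
    simp only [disjoint_left, mem_filter]
    rintro σ ⟨-, ha⟩ ⟨-, hb⟩
    exact hab (singleton_injective (ha ▸ hb))

theorem numDerangements_eq_sum_factorial_div (n : ℕ) :
    (numDerangements n : ℤ) = ∑ k ∈ range (n + 1), (-1) ^ k * ((n ! / k ! : ℕ) : ℤ) := by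
  rw [numDerangements_sum]
  refine sum_congr rfl fun k hk => ?_
  rw [Nat.ascFactorial_eq_div, Nat.add_sub_cancel' (mem_range_succ_iff.1 hk)]

theorem natCast_mul_numDerangements_pred {n : ℕ} (hn : 1 ≤ n) :
    ((n * numDerangements (n - 1) : ℕ) : ℤ) = numDerangements n + (-1) ^ (n - 1) := by
  obtain ⟨m, rfl⟩ : ∃ m, n = m + 1 := ⟨n - 1, by omega⟩
  rw [Nat.add_sub_cancel, numDerangements_succ]
  push_cast
  ring

end Counting

section RookPlacements

variable {α : Type*}

def IsRookPlacement (C : Finset (α × α)) : Prop :=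
  ∀ p ∈ C, ∀ q ∈ C, p ≠ q → p.1 ≠ q.1 ∧ p.2 ≠ q.2

def IsMaximalOffDiagPlacement (C : Finset (α × α)) : Prop :=
  (∀ p ∈ C, p.1 ≠ p.2) ∧ IsRookPlacement C ∧
    ∀ p : α × α, p.1 ≠ p.2 → p ∉ C → ∃ q ∈ C, p.1 = q.1 ∨ p.2 = q.2

namespace IsRookPlacement

variable {C : Finset (α × α)}

theorem injOn_fst (hC : IsRookPlacement C) : Set.InjOn Prod.fst (C : Set (α × α)) :=
  fun p hp q hq h => by_contra fun hpq => (hC p hp q hq hpq).1 h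

theorem injOn_snd (hC : IsRookPlacement C) : Set.InjOn Prod.snd (C : Set (α × α)) :=
  fun p hp q hq h => by_contra fun hpq => (hC p hp q hq hpq).2 h

theorem insert [DecidableEq α] (hC : IsRookPlacement C) {p : α × α}
    (hp : ∀ q ∈ C, p.1 ≠ q.1 ∧ p.2 ≠ q.2) : IsRookPlacement (insert p C) := by
  intro x hx y hy hxy
  rcases mem_insert.1 hx with hx | hx <;> rcases mem_insert.1 hy with hy | hy
  · exact absurd (hx.trans hy.symm) hxy
  · exact hx ▸ hp y hy
  · exact hy ▸ (hp x hx).imp Ne.symm Ne.symm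
  · exact hC x hx y hy hxy

theorem exists_perm [Finite α] (hC : IsRookPlacement C) (hrows : ∀ i, ∃ j, (i, j) ∈ C) :
    ∃ σ : Perm α, ∀ p, p ∈ C ↔ σ p.1 = p.2 := by
  choose f hf using hrows
  have hinj : Injective f := fun i j h =>
    by_contra fun hij => (hC _ (hf i) _ (hf j) fun e => hij (congrArg Prod.fst e)).2 h
  refine ⟨ofBijective f hinj.bijective_of_finite, fun ⟨i, j⟩ => ⟨fun hij => ?_, ?_⟩⟩
  · exact by_contra fun h => (hC _ (hf i) _ hij fun e => h (congrArg Prod.snd e)).1 rfl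
  · intro h
    rw [← show f i = j from h]
    exact hf i

end IsRookPlacement

end RookPlacements

section Placements

variable {α : Type*} [Fintype α] [DecidableEq α]

def offDiagGraph (σ : Perm α) : Finset (α × α) := σ.support.image fun i => (i, σ i)

theorem mem_offDiagGraph {σ : Perm α} {p : α × α} :
    p ∈ offDiagGraph σ ↔ σ p.1 = p.2 ∧ p.1 ≠ p.2 := by
  obtain ⟨i, j⟩ := p
  simp only [offDiagGraph, mem_image, Perm.mem_support, Prod.mk.injEq]
  constructor
  · rintro ⟨i, hi, rfl, rfl⟩
    exact ⟨rfl, Ne.symm hi⟩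
  · rintro ⟨rfl, h⟩
    exact ⟨i, Ne.symm h, rfl, rfl⟩

theorem card_offDiagGraph (σ : Perm α) : #(offDiagGraph σ) = #σ.support :=
  card_image_of_injective _ fun _ _ h => (Prod.mk.inj h).1

theorem offDiagGraph_injective : Injective (offDiagGraph (α := α)) := by
  have agree {σ τ : Perm α} (h : offDiagGraph σ = offDiagGraph τ) (i : α) (hi : σ i ≠ i) :
      τ i = σ i := by
    have hmem : (i, σ i) ∈ offDiagGraph τ := h ▸ mem_offDiagGraph.2 ⟨rfl, Ne.symm hi⟩
    exact (mem_offDiagGraph.1 hmem).1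
  intro σ τ h
  ext i
  by_cases hσ : σ i = i
  · by_cases hτ : τ i = i
    · rw [hσ, hτ]
    · exact agree h.symm i hτ
  · exact (agree h i hσ).symm

theorem exists_compl_eq_singleton {s : Finset α} (hs : #s = Fintype.card α - 1)
    (hα : 1 ≤ Fintype.card α) : ∃ r, sᶜ = {r} :=
  card_eq_one.1 (by rw [card_compl]; omega)

theorem isMaximalOffDiagPlacement_offDiagGraph {σ : Perm α} {a : α}
    (ha : ∀ i, σ i = i ↔ i = a) : IsMaximalOffDiagPlacement (offDiagGraph σ) := by
  refine ⟨fun p hp => (mem_offDiagGraph.1 hp).2, ?_, ?_⟩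
  · intro p hp q hq hpq
    rw [mem_offDiagGraph] at hp hq
    have hrow : p.1 ≠ q.1 := fun h => hpq (Prod.ext h (hp.1 ▸ hq.1 ▸ congrArg σ h))
    exact ⟨hrow, hp.1 ▸ hq.1 ▸ σ.injective.ne hrow⟩
  · rintro ⟨x, y⟩ hxy -
    by_cases hx : σ x = x
    · -- `x` is the fixed point, so `y` is not, and then neither is `σ⁻¹ y`
      have hy : σ.symm y ≠ y := fun h => hxy <| ((ha x).1 hx).trans
        ((ha y).1 (by simpa using congrArg σ h.symm)).symm
      exact ⟨(σ.symm y, y), mem_offDiagGraph.2 ⟨by simp, hy⟩, Or.inr rfl⟩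
    · exact ⟨(x, σ x), mem_offDiagGraph.2 ⟨rfl, Ne.symm hx⟩, Or.inl rfl⟩

theorem card_offDiagGraph_of_card_fixed_eq_one {σ : Perm α}
    (hσ : #{i | σ i = i} = 1) : #(offDiagGraph σ) = Fintype.card α - 1 := by
  rw [card_offDiagGraph, Perm.support, filter_not, card_univ_sdiff, hσ]

theorem exists_perm_offDiagGraph_eq {C : Finset (α × α)} (hα : 1 ≤ Fintype.card α)
    (hcard : #C = Fintype.card α - 1) (hC : IsMaximalOffDiagPlacement C) :
    ∃ σ : Perm α, #{i | σ i = i} = 1 ∧ offDiagGraph σ = C := by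
  obtain ⟨hoff, hrook, hmax⟩ := hC
  obtain ⟨r, hr⟩ := exists_compl_eq_singleton (s := C.image Prod.fst)
    (by rw [card_image_of_injOn hrook.injOn_fst, hcard]) hα
  obtain ⟨c, hc⟩ := exists_compl_eq_singleton (s := C.image Prod.snd)
    (by rw [card_image_of_injOn hrook.injOn_snd, hcard]) hα
  have hrow (q) (hq : q ∈ C) : q.1 ≠ r := fun h =>
    mem_compl.1 (hr ▸ mem_singleton_self r) (h ▸ mem_image_of_mem Prod.fst hq)
  have hcol (q) (hq : q ∈ C) : q.2 ≠ c := fun h =>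
    mem_compl.1 (hc ▸ mem_singleton_self c) (h ▸ mem_image_of_mem Prod.snd hq)
  obtain rfl : r = c := by
    by_contra hne
    obtain ⟨q, hq, h | h⟩ := hmax (r, c) hne fun h => hrow _ h rfl
    exacts [hrow q hq h.symm, hcol q hq h.symm]
  have hrows (i : α) : ∃ j, (i, j) ∈ insert (r, r) C := by
    by_cases hi : i ∈ C.image Prod.fst
    · obtain ⟨q, hq, rfl⟩ := mem_image.1 hi
      exact ⟨q.2, mem_insert_of_mem hq⟩
    · rw [← mem_compl, hr, mem_singleton] at hi
      exact ⟨r, hi ▸ mem_insert_self _ _⟩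
  obtain ⟨σ, hσ⟩ :=
    (hrook.insert fun q hq => ⟨(hrow q hq).symm, (hcol q hq).symm⟩).exists_perm hrows
  have hfixed : ({i | σ i = i} : Finset α) = {r} := by
    ext i
    have hdiag : (i, i) ∉ C := fun h => hoff _ h rfl
    simp [← hσ (i, i), hdiag]
  refine ⟨σ, by rw [hfixed, card_singleton], ?_⟩
  ext p
  rw [mem_offDiagGraph, ← hσ, mem_insert]
  constructor
  · rintro ⟨rfl | h, hp⟩
    exacts [absurd rfl hp, h]
  · exact fun h => ⟨Or.inr h, hoff p h⟩

theorem bijOn_offDiagGraph (hα : 1 ≤ Fintype.card α) :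
    Set.BijOn offDiagGraph {σ : Perm α | #{i | σ i = i} = 1}
      {C | #C = Fintype.card α - 1 ∧ IsMaximalOffDiagPlacement C} := by
  refine ⟨fun σ hσ => ⟨card_offDiagGraph_of_card_fixed_eq_one hσ, ?_⟩,
    offDiagGraph_injective.injOn,
    fun C ⟨hcard, hC⟩ => exists_perm_offDiagGraph_eq hα hcard hC⟩
  obtain ⟨a, ha⟩ := card_eq_one.1 hσ
  exact isMaximalOffDiagPlacement_offDiagGraph fun i => by simpa using Finset.ext_iff.1 ha i

theorem ncard_maximalOffDiagPlacements (hα : 1 ≤ Fintype.card α) :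
    {C : Finset (α × α) | #C = Fintype.card α - 1 ∧ IsMaximalOffDiagPlacement C}.ncard =
      Fintype.card α * numDerangements (Fintype.card α - 1) := by
  rw [← (bijOn_offDiagGraph hα).image_eq, offDiagGraph_injective.injOn.ncard_image,
    Set.ncard_eq_toFinset_card', Set.toFinset_ofPred, card_perm_card_fixed_eq_one]

end Placements

/-- Maximal frame-free configurations of cardinality `n-1` are in bijection (via
`σ ↦ {(i, σ i) : σ i ≠ i}`) with permutations having exactly one fixed point, and hence
number `D_n + (-1)^(n-1)`. -/
theorem configs_card_pred_bij (n : ℕ) (hn : 2 ≤ n) :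
    Set.BijOn
      (fun σ : Equiv.Perm (Fin n) =>
        (Finset.univ.filter fun i => σ i ≠ i).image (fun i => (i, σ i)))
      {σ : Equiv.Perm (Fin n) | (Finset.univ.filter fun i => σ i = i).card = 1}
      {C : Finset (Fin n × Fin n) | C.card = n - 1 ∧ (∀ p ∈ C, p.1 ≠ p.2) ∧
        (∀ p ∈ C, ∀ q ∈ C, p ≠ q → p.1 ≠ q.1 ∧ p.2 ≠ q.2) ∧
        ∀ p : Fin n × Fin n, p.1 ≠ p.2 → p ∉ C → ∃ q ∈ C, p.1 = q.1 ∨ p.2 = q.2}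
    ∧ (({C : Finset (Fin n × Fin n) | C.card = n - 1 ∧ (∀ p ∈ C, p.1 ≠ p.2) ∧
        (∀ p ∈ C, ∀ q ∈ C, p ≠ q → p.1 ≠ q.1 ∧ p.2 ≠ q.2) ∧
        ∀ p : Fin n × Fin n, p.1 ≠ p.2 → p ∉ C → ∃ q ∈ C, p.1 = q.1 ∨ p.2 = q.2}.ncard : ℤ)
      = (∑ k ∈ Finset.range (n + 1), (-1 : ℤ) ^ k * ((n.factorial / k.factorial : ℕ) : ℤ))
        + (-1) ^ (n - 1)) := by
  have hα : 1 ≤ Fintype.card (Fin n) := by rw [Fintype.card_fin]; omega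
  have hbij := bijOn_offDiagGraph hα
  have hcount := ncard_maximalOffDiagPlacements hα
  rw [Fintype.card_fin] at hbij hcount
  refine ⟨hbij, ?_⟩
  rw [← numDerangements_eq_sum_factorial_div, ← natCast_mul_numDerangements_pred (by omega)]
  exact congrArg Nat.cast hcount
end

section
/- Let $n \geq 3$ and let $U = (u_{ij})$ be a symmetric $n \times n$ matrix with zero diagonal over a field, whose off-diagonal entries are nonzero and satisfy the cyclic exchange relations $u_{ij}u_{kl} + u_{jk}u_{li} = u_{ik}u_{jl}$ for all $i,j,k,l$ in clockwise cyclic order. Then $\sum_{\sigma} \operatorname{sgn}(\sigma) \prod_{i=1}^{n} u_{i,\sigma(i)} = -(-2)^{n-2} u_{12} u_{23} \cdots u_{n-1,n} u_{n,1}$, where the sum is over all derangements $\sigma$ of $\{1, \ldots, n\}$. -/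
/-!
For a consecutive triple `a < b < k` of indices, the exchange relations (with `U` symmetric and
zero on the diagonal) make `U a b • row k - U a k • row b + U b k • row a` vanish outside column
`b`, where it equals `2 * U a b * U b k`. Applying this to the rows `k ≥ 2` is a unitriangular row
operation, after which row `k` is `2 * U (k - 1) k` times the basis row `k - 1`, while rows `0, 1`
are still those of `U`. Rotating the rows by two steps and the columns by one step turns this
matrix into a lower triangular one whose diagonal is `2 * U (k - 1) k` (`k ≥ 2`), `U 0 (n - 1)`
and `U 1 0`, and the sign of the rotation is `(-1) ^ (n - 1)`. Finally, as the diagonal of `U`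
vanishes, only derangements contribute to the Leibniz expansion of `det U`.
-/

open Matrix Finset Equiv

theorem Matrix.det_eq_sum_derangements {ι R : Type*} [Fintype ι] [DecidableEq ι] [CommRing R]
    [DecidablePred fun σ : Perm ι => ∀ i, σ i ≠ i] (M : Matrix ι ι R) (hM : ∀ i, M i i = 0) :
    M.det = ∑ σ ∈ univ.filter (fun σ : Perm ι => ∀ i, σ i ≠ i),
      ((Perm.sign σ : ℤ) : R) * ∏ i, M i (σ i) := by
  rw [← det_transpose, det_apply', eq_comm]
  refine sum_filter_of_ne fun σ _ hσ i hi => hσ ?_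
  rw [prod_eq_zero (mem_univ i) (by rw [hi, hM]), mul_zero]

theorem exchange_row_combination_eq {ι R : Type*} [LinearOrder ι] [CommRing R] {U : Matrix ι ι R}
    (hsym : U.IsSymm) (hdiag : ∀ i, U i i = 0)
    (hex : ∀ i j k l, i < j → j < k → k < l → U i j * U k l + U j k * U l i = U i k * U j l)
    {a b k : ι} (hab : a < b) (hbk : b < k) (hgap : ∀ j, a < j → j < k → j = b) (j : ι) :
    U a b * U k j - U a k * U b j + U b k * U a j = if j = b then 2 * U a b * U b k else 0 := by
  rcases lt_trichotomy j a with hja | rfl | haj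
  · rw [if_neg (hja.trans hab).ne, hsym.apply j b, hsym.apply j a]
    linear_combination hex j a b k hja hab hbk
  · rw [if_neg hab.ne, hdiag, hsym.apply j b, hsym.apply j k]; ring
  rcases lt_trichotomy j k with hjk | rfl | hkj
  · obtain rfl := hgap j haj hjk
    rw [if_pos rfl, hdiag, hsym.apply j k]; ring
  · rw [if_neg hbk.ne', hdiag]; ring
  · rw [if_neg (hbk.trans hkj).ne', hsym.apply j a]
    linear_combination hex a b k j hab hbk hkj

namespace Fin

variable {n : ℕ}

lemma val_finRotate (i : Fin n) :
    (finRotate n i : ℕ) = if (i : ℕ) + 1 = n then 0 else (i : ℕ) + 1 := by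
  obtain ⟨m, rfl⟩ := Nat.exists_eq_succ_of_ne_zero (i.pos.ne')
  simp only [coe_finRotate, Fin.ext_iff, Fin.val_last, Nat.succ_eq_add_one, add_left_inj]

lemma val_sub_one_sub_two [NeZero n] {k : Fin n} (hk : 2 ≤ (k : ℕ)) :
    ((k - 1 : Fin n) : ℕ) = k - 1 ∧ ((k - 2 : Fin n) : ℕ) = k - 2 := by
  have h1 : ((1 : Fin n) : ℕ) = 1 := by rw [Fin.val_one', Nat.mod_eq_of_lt (by omega)]
  have h2 : ((2 : Fin n) : ℕ) = 2 := Nat.mod_eq_of_lt (by omega : 2 < n)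
  constructor
  · rw [Fin.coe_sub_iff_le.mpr (by rw [Fin.le_def]; omega), h1]
  · rw [Fin.coe_sub_iff_le.mpr (by rw [Fin.le_def]; omega), h2]

lemma finRotate_sub_one [NeZero n] (i : Fin n) : finRotate n i - 1 = i := by
  rw [← finRotate_symm_apply, Equiv.symm_apply_apply]

lemma prod_ite_two_le_val {M : Type*} [CommMonoid M] (x : M) :
    ∏ k : Fin n, (if 2 ≤ (k : ℕ) then x else 1) = x ^ (n - 2) := by
  rw [Fin.prod_univ_eq_prod_range (fun k => if 2 ≤ k then x else 1), prod_ite, prod_const_one,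
    mul_one, Finset.prod_const, range_eq_Ico, Ico_filter_le, Nat.card_Ico,
    max_eq_right (Nat.zero_le 2)]

end Fin

section FriezeReduction

variable {F : Type*} [Field F] {n : ℕ} [NeZero n]

def friezeRowOp (U : Matrix (Fin n) (Fin n) F) : Matrix (Fin n) (Fin n) F :=
  fun k =>
    if 2 ≤ (k : ℕ) then
      Pi.single k 1 - (U (k - 2) k / U (k - 2) (k - 1)) • Pi.single (k - 1) 1
        + (U (k - 1) k / U (k - 2) (k - 1)) • Pi.single (k - 2) 1
    else Pi.single k 1

def friezeReduced (U : Matrix (Fin n) (Fin n) F) : Matrix (Fin n) (Fin n) F :=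
  of fun k j => if 2 ≤ (k : ℕ) then (if j = k - 1 then 2 * U j k else 0) else U k j

variable {U : Matrix (Fin n) (Fin n) F}

theorem friezeRowOp_mul (hsym : U.IsSymm) (hdiag : ∀ i, U i i = 0)
    (hnz : ∀ i j : Fin n, i ≠ j → U i j ≠ 0)
    (hex : ∀ i j k l : Fin n, i < j → j < k → k < l →
      U i j * U k l + U j k * U l i = U i k * U j l) :
    friezeRowOp U * U = friezeReduced U := by
  ext k j
  rw [mul_apply_eq_vecMul]
  by_cases hk : 2 ≤ (k : ℕ)
  swap
  · simp only [friezeRowOp, friezeReduced, of_apply, if_neg hk, single_one_vecMul, row_apply]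
  obtain ⟨hb, ha⟩ := Fin.val_sub_one_sub_two hk
  have hab : k - 2 < k - 1 := by rw [Fin.lt_def]; omega
  have hbk : k - 1 < k := by rw [Fin.lt_def]; omega
  have hgap : ∀ j, k - 2 < j → j < k → j = k - 1 := by
    intro j; simp only [Fin.lt_def, Fin.ext_iff]; omega
  have hU : U (k - 2) (k - 1) ≠ 0 := hnz _ _ hab.ne
  have := exchange_row_combination_eq hsym hdiag hex hab hbk hgap j
  simp only [friezeRowOp, friezeReduced, of_apply, if_pos hk, add_vecMul, sub_vecMul, smul_vecMul,
    single_one_vecMul, Pi.add_apply, Pi.sub_apply, Pi.smul_apply, row_apply, smul_eq_mul]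
  field_simp
  split_ifs at this ⊢ with hj
  · subst hj; linear_combination this
  · linear_combination this

theorem det_friezeRowOp : (friezeRowOp U).det = 1 := by
  have hsupp : ∀ k j : Fin n, (k : ℕ) ≤ j →
      friezeRowOp U k j = Pi.single (M := fun _ => F) k 1 j := by
    intro k j hkj
    simp only [friezeRowOp]
    split_ifs with hk
    · obtain ⟨hb, ha⟩ := Fin.val_sub_one_sub_two hk
      have hb' : j ≠ k - 1 := by rw [Ne, Fin.ext_iff]; omega
      have ha' : j ≠ k - 2 := by rw [Ne, Fin.ext_iff]; omega
      simp only [Pi.add_apply, Pi.sub_apply, Pi.smul_apply, Pi.single_eq_of_ne hb',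
        Pi.single_eq_of_ne ha', smul_zero, sub_zero, add_zero]
    · rfl
  refine (det_of_isLowerTriangular _ fun k j hkj => ?_).trans (prod_eq_one fun k _ => ?_)
  · have hkj : k < j := hkj
    rw [hsupp k j hkj.le, Pi.single_eq_of_ne hkj.ne']
  · rw [hsupp k k le_rfl, Pi.single_eq_same]

theorem friezeReduced_rotate_isLowerTriangular (hdiag : ∀ i, U i i = 0) :
    (((friezeReduced U).submatrix (finRotate n) id).submatrix (finRotate n)
      (finRotate n)).IsLowerTriangular := by
  set c := finRotate n
  intro i j hij
  have hij : i < j := hij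
  simp only [submatrix_apply, id, friezeReduced, of_apply]
  split_ifs with hk hj
  · rw [Fin.finRotate_sub_one] at hj
    exact absurd (c.injective hj) hij.ne'
  · rfl
  · -- row `c (c i) < 2` with `i < j` forces `i = n - 2`, so `j = n - 1` and `c j = 0 = c (c i)`
    have hc : (c i : ℕ) = _ := Fin.val_finRotate i
    have hcc : (c (c i) : ℕ) = _ := Fin.val_finRotate (c i)
    have hcj : (c j : ℕ) = _ := Fin.val_finRotate j
    have : c j = c (c i) := by
      rw [Fin.ext_iff]
      split_ifs at hc hcc hcj <;> omega
    rw [← this, hdiag]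

theorem det_friezeReduced (hsym : U.IsSymm) (hdiag : ∀ i, U i i = 0) :
    (friezeReduced U).det = Perm.sign (finRotate n) * (2 ^ (n - 2) * ∏ i, U i (finRotate n i)) := by
  set c := finRotate n
  set M := ((friezeReduced U).submatrix c id).submatrix c c
  have hMdiag : ∀ i, M i i = (if 2 ≤ (c (c i) : ℕ) then 2 else 1) * U (c i) (c (c i)) := by
    intro i
    have hpred : c (c i) - 1 = c i := Fin.finRotate_sub_one (c i)
    simp only [M, submatrix_apply, id, friezeReduced, of_apply, hpred]
    split_ifs
    · rfl
    · rw [one_mul, hsym.apply]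
  have hMdet : M.det = Perm.sign c * (friezeReduced U).det := by
    rw [det_submatrix_equiv_self, det_permute]
  have hMprod : M.det = 2 ^ (n - 2) * ∏ i, U i (c i) := by
    rw [det_of_isLowerTriangular M (friezeReduced_rotate_isLowerTriangular hdiag),
      prod_congr rfl fun i _ => hMdiag i, prod_mul_distrib,
      Equiv.prod_comp c fun k => if 2 ≤ ((c k : Fin n) : ℕ) then (2 : F) else 1,
      Equiv.prod_comp c fun k => if 2 ≤ (k : ℕ) then (2 : F) else 1, Fin.prod_ite_two_le_val,
      Equiv.prod_comp c fun k => U k (c k)]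
  have hsign : ((Perm.sign c : ℤ) : F) * (Perm.sign c : ℤ) = 1 := by
    rw [← Int.cast_mul, ← Units.val_mul, Int.units_mul_self, Units.val_one, Int.cast_one]
  linear_combination (-(friezeReduced U).det) * hsign - (Perm.sign c : ℤ) * hMdet
    + (Perm.sign c : ℤ) * hMprod

end FriezeReduction

/-- The frieze determinant theorem, stated via the Leibniz expansion over derangements. -/
theorem frieze_det_derangement_sum {F : Type*} [Field F] (n : ℕ) (hn : 3 ≤ n)
    (U : Matrix (Fin n) (Fin n) F)
    (hsym : U.IsSymm)
    (hdiag : ∀ i, U i i = 0)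
    (hnz : ∀ i j : Fin n, i ≠ j → U i j ≠ 0)
    (hex : ∀ i j k l : Fin n, i < j → j < k → k < l →
      U i j * U k l + U j k * U l i = U i k * U j l) :
    ∑ σ ∈ Finset.univ.filter (fun σ : Equiv.Perm (Fin n) => ∀ i, σ i ≠ i),
        ((Equiv.Perm.sign σ : ℤ) : F) * ∏ i : Fin n, U i (σ i)
      = -(-2 : F) ^ (n - 2) * ∏ i : Fin n, U i (finRotate n i) := by
  have : NeZero n := ⟨by omega⟩
  have hreduce : U.det = (friezeReduced U).det := by
    rw [← friezeRowOp_mul hsym hdiag hnz hex, det_mul, det_friezeRowOp, one_mul]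
  rw [← U.det_eq_sum_derangements hdiag, hreduce, det_friezeReduced hsym hdiag, sign_finRotate]
  obtain ⟨m, rfl⟩ : ∃ m, n = m + 2 := ⟨n - 2, by omega⟩
  rw [Nat.add_sub_cancel, show m + 2 - 1 = m + 1 by omega, neg_pow (2 : F)]
  push_cast
  ring
end

section
/- Let $n \geq 3$. For a zero-diagonal symmetric matrix $U = (u_{ij})$ over a field with nonzero off-diagonal entries satisfying the cyclic exchange relations, $\det(U) \neq 0$ whenever the characteristic of the field is not 2 and the boundary entries $u_{i,i+1}$ ($i$ mod $n$) are all nonzero. -/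
/-!
Let `v` be a kernel vector of `U`. For consecutive indices `i ⋖ j ⋖ k` the exchange relations
make the combination `U j k • U i - U i k • U j + U i j • U k` of rows equal to
`2 U i j U j k` times the `j`-th unit vector, so `v j = 0` at every inner index. The rows of the
two extreme indices then read `U ⊥ ⊤ * v ⊤ = 0` and `U ⊤ ⊥ * v ⊥ = 0`, hence `v = 0`.
-/

namespace Matrix

variable {ι R : Type*} [CommRing R] {U : Matrix ι ι R}

theorem mulVec_apply_eq_of_forall_ne [Fintype ι] (hdiag : ∀ i, U i i = 0) {v : ι → R}
    {a b : ι} (hv : ∀ l, l ≠ a → l ≠ b → v l = 0) : (U *ᵥ v) a = U a b * v b := by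
  refine Finset.sum_eq_single b (fun l _ hlb => ?_) (by simp)
  show U a l * v l = 0
  by_cases hla : l = a
  · rw [hla, hdiag, zero_mul]
  · rw [hv l hla hlb, mul_zero]

section Exchange

variable [LinearOrder ι] (hsym : U.IsSymm) (hdiag : ∀ i, U i i = 0)
  (hex : ∀ i j k l : ι, i < j → j < k → k < l →
    U i j * U k l + U j k * U l i = U i k * U j l)
include hsym hdiag hex

theorem row_combination_of_covBy {i j k : ι} (hij : i ⋖ j) (hjk : j ⋖ k) :
    U j k • U i - U i k • U j + U i j • U k = Pi.single j (2 * (U i j * U j k)) := by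
  have hs := hsym.apply
  funext l
  simp only [Pi.add_apply, Pi.sub_apply, Pi.smul_apply, smul_eq_mul]
  rcases lt_trichotomy l j with hlj | rfl | hjl
  · rw [Pi.single_eq_of_ne hlj.ne]
    rcases lt_or_eq_of_le (hij.le_of_lt hlj) with hli | rfl
    · linear_combination hex l i j k hli hij.lt hjk.lt + U j k * hs l i - U i k * hs l j
    · rw [hdiag, hs l j, hs l k]
      ring
  · rw [Pi.single_eq_same, hdiag, hs l k]
    ring
  · rw [Pi.single_eq_of_ne hjl.ne']
    rcases lt_or_eq_of_le (hjk.ge_of_gt hjl) with hkl | rfl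
    · linear_combination hex i j k l hij.lt hjk.lt hkl + U j k * hs l i
    · rw [hdiag]
      ring

section NoZeroDivisors

variable [NoZeroDivisors R] (h2 : (2 : R) ≠ 0) (hnz : ∀ i j, i ≠ j → U i j ≠ 0)
include h2 hnz

theorem apply_eq_zero_of_mulVec_eq_zero_of_covBy [Fintype ι] {v : ι → R} (hv : U *ᵥ v = 0)
    {i j k : ι} (hij : i ⋖ j) (hjk : j ⋖ k) : v j = 0 := by
  have hrow (m : ι) : U m ⬝ᵥ v = 0 := congrFun hv m
  have key : 2 * (U i j * U j k) * v j = 0 := by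
    rw [← single_dotProduct, ← row_combination_of_covBy hsym hdiag hex hij hjk]
    simp only [add_dotProduct, sub_dotProduct, smul_dotProduct, hrow, smul_zero, sub_zero,
      add_zero]
  exact (mul_eq_zero.mp key).resolve_left
    (mul_ne_zero h2 (mul_ne_zero (hnz _ _ hij.ne) (hnz _ _ hjk.ne)))

theorem eq_zero_of_mulVec_eq_zero_of_exchange [Fintype ι] [BoundedOrder ι] [SuccOrder ι]
    [PredOrder ι] [Nontrivial ι] {v : ι → R} (hv : U *ᵥ v = 0) : v = 0 := by
  have hinner (l : ι) (hbot : l ≠ ⊥) (htop : l ≠ ⊤) : v l = 0 :=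
    apply_eq_zero_of_mulVec_eq_zero_of_covBy hsym hdiag hex h2 hnz hv
      (Order.pred_covBy_of_not_isMin (isMin_iff_eq_bot.not.mpr hbot))
      (Order.covBy_succ_of_not_isMax (isMax_iff_eq_top.not.mpr htop))
  have htop : v ⊤ = 0 := by
    have h := mulVec_apply_eq_of_forall_ne hdiag (a := ⊥) (b := ⊤) hinner
    rw [hv] at h
    exact (mul_eq_zero.mp h.symm).resolve_left (hnz _ _ bot_ne_top)
  have hbot : v ⊥ = 0 := by
    have h := mulVec_apply_eq_of_forall_ne hdiag (a := ⊤) (b := ⊥) fun l ha hb => hinner l hb ha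
    rw [hv] at h
    exact (mul_eq_zero.mp h.symm).resolve_left (hnz _ _ top_ne_bot)
  funext l
  by_cases hl : l = ⊥
  · rw [hl, hbot, Pi.zero_apply]
  by_cases hl' : l = ⊤
  · rw [hl', htop, Pi.zero_apply]
  exact hinner l hl hl'

end NoZeroDivisors

theorem det_ne_zero_of_exchange [Fintype ι] [DecidableEq ι] [BoundedOrder ι] [SuccOrder ι]
    [PredOrder ι] [Nontrivial ι] [IsDomain R] (h2 : (2 : R) ≠ 0)
    (hnz : ∀ i j, i ≠ j → U i j ≠ 0) : U.det ≠ 0 := by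
  intro hdet
  obtain ⟨v, hv0, hv⟩ := exists_mulVec_eq_zero_iff.mpr hdet
  exact hv0 (eq_zero_of_mulVec_eq_zero_of_exchange hsym hdiag hex h2 hnz hv)

end Exchange

end Matrix

theorem frieze_det_ne_zero_general {F : Type*} [Field F] (n : ℕ) (hn : 3 ≤ n)
    (hchar : ringChar F ≠ 2)
    (U : Matrix (Fin n) (Fin n) F)
    (hsym : U.IsSymm)
    (hdiag : ∀ i, U i i = 0)
    (hnz : ∀ i j : Fin n, i ≠ j → U i j ≠ 0)
    (hex : ∀ i j k l : Fin n, i < j → j < k → k < l →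
      U i j * U k l + U j k * U l i = U i k * U j l) :
    U.det ≠ 0 := by
  have : NeZero n := ⟨by omega⟩
  have : Nontrivial (Fin n) := Fin.nontrivial_iff_two_le.mpr (by omega)
  exact Matrix.det_ne_zero_of_exchange hsym hdiag hex (Ring.two_ne_zero hchar) hnz

/-- When the characteristic of the field is not 2 and the boundary entries are nonzero,
the frieze determinant is nonzero. -/
theorem frieze_det_ne_zero {F : Type*} [Field F] (n : ℕ) (hn : 3 ≤ n)
    (hchar : ringChar F ≠ 2)
    (U : Matrix (Fin n) (Fin n) F)
    (hsym : U.IsSymm)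
    (hdiag : ∀ i, U i i = 0)
    (hnz : ∀ i j : Fin n, i ≠ j → U i j ≠ 0)
    (hbdry : ∀ i : Fin n, U i (finRotate n i) ≠ 0)
    (hex : ∀ i j k l : Fin n, i < j → j < k → k < l →
      U i j * U k l + U j k * U l i = U i k * U j l) :
    U.det ≠ 0 :=
  frieze_det_ne_zero_general n hn hchar U hsym hdiag hnz hex
end
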